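/- Let S be a supercharacter theory of a finite group G and let N be an S-normal subgroup. If (G,N) is an S-GCP (every element of G∖N is an S-Camina element), then [G,S] ≤ N. -/

import Mathlib

open scoped BigOperators Pointwise

/-- `f : G → ℂ` is an irreducible character of `G`. -/
def IsIrrChar (G : Type) [Group G] [Fintype G] (f : G → ℂ) : Prop :=
  ∃ V : FDRep ℂ G, CategoryTheory.Simple V ∧ V.character = f

/-- A supercharacter theory of a finite group `G` (Diaconis–Isaacs): a partition
`parts` of the set of irreducible characters of `G` together with a partition of `G`
into `S`-classes (`cls g` is the class of `g`), such that `{1}` is a class, the number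
of parts equals the number of classes, and each supercharacter
`σ_X = ∑ χ ∈ X, χ(1)·χ` is constant on every class. -/
structure SCT (G : Type) [Group G] [Fintype G] where
  parts : Finset (Finset (G → ℂ))
  cls : G → Set G
  parts_cover : ∀ f : G → ℂ, IsIrrChar G f ↔ ∃ X ∈ parts, f ∈ X
  parts_disj : ∀ X ∈ parts, ∀ Y ∈ parts, X ≠ Y → Disjoint X Y
  parts_nonempty : ∀ X ∈ parts, X.Nonempty
  mem_cls : ∀ g : G, g ∈ cls g
  cls_eq : ∀ g h : G, h ∈ cls g → cls h = cls g
  cls_one : cls (1 : G) = {1}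
  card_eq : parts.card = Nat.card (Set.range cls)
  const : ∀ X ∈ parts, ∀ g h : G, h ∈ cls g →
    (∑ χ ∈ X, χ 1 * χ h) = (∑ χ ∈ X, χ 1 * χ g)

variable {G : Type} [Group G] [Fintype G]

namespace SCT

/-- The supercharacter attached to a part `X`. -/
noncomputable def superchar (_S : SCT G) (X : Finset (G → ℂ)) : G → ℂ := fun g => ∑ χ ∈ X, χ 1 * χ g

/-- The set `Irr(S)` of `S`-characters. -/
def Irr (S : SCT G) : Set (G → ℂ) := {f | ∃ X ∈ S.parts, f = S.superchar X}

end SCT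

/-- The kernel of a character-like function `f : G → ℂ`. -/
def charKer (f : G → ℂ) : Subgroup G where
  carrier := {g | ∀ h, f (g * h) = f h}
  one_mem' := by intro h; simp
  mul_mem' := by intro a b ha hb h; rw [mul_assoc, ha, hb]
  inv_mem' := by
    intro a ha h
    have := ha (a⁻¹ * h)
    rw [mul_inv_cancel_left] at this
    exact this.symm

namespace SCT

/-- `[H,S]`, the subgroup generated by the `g⁻¹k` with `g ∈ H`, `k ∈ Cl_S(g)`. -/
def comm (S : SCT G) (H : Subgroup G) : Subgroup G :=
  Subgroup.closure {x | ∃ g ∈ H, ∃ k ∈ S.cls g, x = g⁻¹ * k}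

/-- `[G,S]`. -/
def derived (S : SCT G) : Subgroup G := S.comm ⊤

/-- `Irr(S | N)`: the `S`-characters whose kernel does not contain `N`. -/
def IrrRel (S : SCT G) (N : Subgroup G) : Set (G → ℂ) :=
  {f | f ∈ S.Irr ∧ ¬ N ≤ charKer f}

/-- `g` is an `S`-Camina element: all of `Irr(S | [G,S])` vanishes at `g`. -/
def IsCaminaElt (S : SCT G) (g : G) : Prop :=
  ∀ f ∈ S.IrrRel S.derived, f g = 0

/-- `N` is `S`-normal: a union of `S`-classes. -/
def IsNormal (S : SCT G) (N : Subgroup G) : Prop :=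
  ∀ g ∈ N, S.cls g ⊆ N

/-- `(G,N)` is a generalised `S`-Camina pair. -/
def IsGCP (S : SCT G) (N : Subgroup G) : Prop :=
  S.IsNormal N ∧ ∀ g : G, g ∉ N → S.IsCaminaElt g

/-- The set `Z(S)` of elements with singleton `S`-class. -/
def centerSet (S : SCT G) : Set G := {g | S.cls g = {g}}

/-- The vanishing-off subgroup `V(S | N)`. -/
def V (S : SCT G) (N : Subgroup G) : Subgroup G :=
  Subgroup.closure {g | ∃ f ∈ S.IrrRel N, f g ≠ 0}

/-- `V(S) = V(S | [G,S])`. -/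
def VS (S : SCT G) : Subgroup G := S.V S.derived

/-- `U(S | N)`: the product of all `S`-normal subgroups `H` with `V(S | H) ≤ N`. -/
def U (S : SCT G) (N : Subgroup G) : Subgroup G :=
  ⨆ (H : Subgroup G) (_ : S.IsNormal H ∧ S.V H ≤ N), H

/-- The upper `S`-central series: `ζ_0 = 1` and `ζ_{i+1}/ζ_i = Z(S^{G/ζ_i})`,
i.e. `ζ_{i+1}` consists of the `g` whose `S`-class maps onto the single coset `gζ_i`. -/
def zeta (S : SCT G) : ℕ → Subgroup G
  | 0 => ⊥
  | i + 1 => Subgroup.closure {g | ∀ k ∈ S.cls g, g⁻¹ * k ∈ S.zeta i}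

/-- The lower `S`-central series `γ_1 = G`, `γ_{i+1} = [γ_i, S]` (with `γ_0 := G`). -/
def gamma (S : SCT G) : ℕ → Subgroup G
  | 0 => ⊤
  | 1 => ⊤
  | n + 2 => S.comm (S.gamma (n + 1))

/-- The series `V_1(S) = V(S)`, `V_{i+1}(S) = [V_i(S), S]` (with `V_0 := V(S)`). -/
def Vseq (S : SCT G) : ℕ → Subgroup G
  | 0 => S.VS
  | 1 => S.VS
  | n + 2 => S.comm (S.Vseq (n + 1))

/-- `G` is a `VZ(S)`-group: every member of `Irr(S | [G,S])` vanishes off `Z(S)`. -/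
def IsVZ (S : SCT G) : Prop :=
  ∀ f ∈ S.IrrRel S.derived, ∀ g : G, g ∉ S.centerSet → f g = 0

end SCT

/-!
Suppose `d ∈ [G,S]` lies outside `N`, so `d` is an `S`-Camina element. Every supercharacter `σ`
either contains `[G,S]` in its kernel, and then `σ(d) = σ(1)`, or vanishes at `d`. The
supercharacters form a basis of the `S`-class functions (they are orthogonal and there are as many
of them as `S`-classes), so their sum is the regular character `|G|·δ₁` and the constant function
`1` lies in their span. Hence `∑ Re σ(d) = 0` with all terms nonnegative, while some `σ(d) ≠ 0`
has real part `σ(1) > 0`.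
-/

open CategoryTheory

/-- `|G|` times the usual inner product of characters, with `g⁻¹` in place of complex
conjugation so that it is bilinear. -/
noncomputable def charPairing (f h : G → ℂ) : ℂ := ∑ g, f g * h g⁻¹

theorem charPairing_sum_left {ι : Type*} (s : Finset ι) (F : ι → G → ℂ) (h : G → ℂ) :
    charPairing (∑ i ∈ s, F i) h = ∑ i ∈ s, charPairing (F i) h := by
  simp only [charPairing, Finset.sum_apply, Finset.sum_mul]
  exact Finset.sum_comm

theorem charPairing_smul_left (c : ℂ) (f h : G → ℂ) :
    charPairing (c • f) h = c * charPairing f h := by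
  simp only [charPairing, Pi.smul_apply, smul_eq_mul, Finset.mul_sum, mul_assoc]

theorem charPairing_of_isIrrChar {χ ψ : G → ℂ} (hχ : IsIrrChar G χ) (hψ : IsIrrChar G ψ) :
    charPairing χ ψ = if χ = ψ then (Nat.card G : ℂ) else 0 := by
  classical
  have hcard : (Nat.card G : ℂ) ≠ 0 := by simp
  have : Invertible (Nat.card G : ℂ) := invertibleOfNonzero hcard
  have orth : ∀ (V W : FDRep ℂ G), Simple V → Simple W →
      charPairing V.character W.character = if Nonempty (V ≅ W) then (Nat.card G : ℂ) else 0 := by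
    intro V W _ _
    have := FDRep.char_orthonormal V W
    rw [inv_mul_eq_iff_eq_mul₀ hcard] at this
    rw [charPairing, this]
    split_ifs <;> simp
  obtain ⟨V, hV, rfl⟩ := hχ
  obtain ⟨W, hW, rfl⟩ := hψ
  rw [orth V W hV hW]
  by_cases hiso : Nonempty (V ≅ W)
  · rw [if_pos hiso, if_pos (FDRep.char_iso hiso.some)]
  · rw [if_neg hiso, if_neg]
    intro heq
    have hVW := orth V W hV hW
    rw [if_neg hiso, heq, orth W W hW hW, if_pos ⟨Iso.refl W⟩] at hVW
    exact hcard hVW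

theorem IsIrrChar.exists_apply_one_eq_natCast {χ : G → ℂ} (hχ : IsIrrChar G χ) :
    ∃ n : ℕ, 0 < n ∧ χ 1 = n := by
  obtain ⟨V, -, rfl⟩ := id hχ
  refine ⟨Module.finrank ℂ V, Nat.pos_of_ne_zero fun h => ?_, FDRep.char_one V⟩
  have : Subsingleton V := Module.finrank_zero_iff.mp h
  have hzero : V.character = 0 := by
    funext g
    simp [FDRep.character, Subsingleton.elim (V.ρ g) 0]
  have hself := charPairing_of_isIrrChar hχ hχ
  rw [if_pos rfl, hzero] at hself
  simp [charPairing, eq_comm, Fintype.card_ne_zero] at hself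

theorem IsIrrChar.apply_one_mul_card_ne_zero {χ : G → ℂ} (hχ : IsIrrChar G χ) :
    χ 1 * Nat.card G ≠ 0 := by
  obtain ⟨n, hn, h1⟩ := hχ.exists_apply_one_eq_natCast
  rw [h1]
  exact mul_ne_zero (by exact_mod_cast hn.ne') (by simp)

namespace SCT

variable (S : SCT G)

theorem isIrrChar_of_mem {X : Finset (G → ℂ)} (hX : X ∈ S.parts) {χ : G → ℂ} (hχ : χ ∈ X) :
    IsIrrChar G χ :=
  (S.parts_cover χ).mpr ⟨X, hX, hχ⟩

theorem charPairing_superchar {X : Finset (G → ℂ)} (hX : X ∈ S.parts) {χ : G → ℂ}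
    (hχ : IsIrrChar G χ) :
    charPairing (S.superchar X) χ = if χ ∈ X then χ 1 * Nat.card G else 0 := by
  have hsum : S.superchar X = ∑ ψ ∈ X, ψ 1 • ψ := by
    funext g
    simp [superchar]
  have hterm : ∀ ψ ∈ X, charPairing (ψ 1 • ψ) χ = if ψ = χ then χ 1 * Nat.card G else 0 := by
    intro ψ hψ
    rw [charPairing_smul_left, charPairing_of_isIrrChar (S.isIrrChar_of_mem hX hψ) hχ]
    split_ifs with h
    · rw [h]
    · rw [mul_zero]
  rw [hsum, charPairing_sum_left, Finset.sum_congr rfl hterm, Finset.sum_ite_eq']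

theorem eq_of_mem_of_mem {X Y : Finset (G → ℂ)} (hX : X ∈ S.parts) (hY : Y ∈ S.parts)
    {χ : G → ℂ} (hχX : χ ∈ X) (hχY : χ ∈ Y) : X = Y := by
  by_contra hne
  exact Finset.disjoint_left.mp (S.parts_disj X hX Y hY hne) hχX hχY

theorem eq_one_iff_of_mem_cls {g h : G} (hh : h ∈ S.cls g) : h = 1 ↔ g = 1 := by
  constructor
  · rintro rfl
    have hg := S.mem_cls g
    rwa [← S.cls_eq g 1 hh, S.cls_one] at hg
  · rintro rfl
    rwa [S.cls_one] at hh

def classFun : Submodule ℂ (G → ℂ) where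
  carrier := {f | ∀ g h, h ∈ S.cls g → f h = f g}
  add_mem' hf₁ hf₂ g h hh := by simp [hf₁ g h hh, hf₂ g h hh]
  zero_mem' _ _ _ := rfl
  smul_mem' c f hf g h hh := by simp [hf g h hh]

noncomputable def classFunEquiv : S.classFun ≃ₗ[ℂ] (Set.range S.cls → ℂ) where
  toFun f c := f.1 c.2.choose
  invFun v := ⟨fun g => v ⟨S.cls g, g, rfl⟩, fun g h hh => congrArg v (Subtype.ext (S.cls_eq g h hh))⟩
  map_add' _ _ := rfl
  map_smul' _ _ := rfl
  left_inv f := by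
    ext g
    have hrep : S.cls (⟨S.cls g, g, rfl⟩ : Set.range S.cls).2.choose = S.cls g :=
      (⟨S.cls g, g, rfl⟩ : Set.range S.cls).2.choose_spec
    exact (f.2 _ g (by rw [hrep]; exact S.mem_cls g)).symm
  right_inv v := by
    funext c
    exact congrArg v (Subtype.ext c.2.choose_spec)

theorem finrank_classFun : Module.finrank ℂ S.classFun = S.parts.card := by
  have := Fintype.ofFinite (Set.range S.cls)
  rw [S.classFunEquiv.finrank_eq, Module.finrank_fintype_fun_eq_card, S.card_eq,
    Nat.card_eq_fintype_card]

noncomputable def supercharClassFun (X : S.parts) : S.classFun :=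
  ⟨S.superchar X, S.const X X.2⟩

theorem charPairing_sum_smul_superchar (c : S.parts → ℂ) (X : S.parts) {χ : G → ℂ}
    (hχ : χ ∈ (X : Finset (G → ℂ))) :
    charPairing (∑ Y, c Y • S.superchar Y) χ = c X * (χ 1 * Nat.card G) := by
  have hirr := S.isIrrChar_of_mem X.2 hχ
  have hterm : ∀ Y : S.parts, charPairing (c Y • S.superchar Y) χ =
      if Y = X then c X * (χ 1 * Nat.card G) else 0 := by
    intro Y
    rw [charPairing_smul_left, S.charPairing_superchar Y.2 hirr]
    by_cases hYX : Y = X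
    · rw [if_pos hYX, hYX, if_pos hχ]
    · rw [if_neg hYX, if_neg fun hχY => hYX (Subtype.ext (S.eq_of_mem_of_mem Y.2 X.2 hχY hχ)),
        mul_zero]
  rw [charPairing_sum_left, Fintype.sum_congr _ _ hterm, Fintype.sum_ite_eq']

theorem coe_sum_smul_supercharClassFun (c : S.parts → ℂ) :
    ((∑ X, c X • S.supercharClassFun X : S.classFun) : G → ℂ) = ∑ X, c X • S.superchar X := by
  simp [supercharClassFun]

theorem linearIndependent_supercharClassFun : LinearIndependent ℂ S.supercharClassFun := by
  rw [Fintype.linearIndependent_iff]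
  intro c hc X
  obtain ⟨χ, hχ⟩ := S.parts_nonempty X X.2
  have hpair := S.charPairing_sum_smul_superchar c X hχ
  rw [← coe_sum_smul_supercharClassFun, hc] at hpair
  simp only [ZeroMemClass.coe_zero, charPairing, Pi.zero_apply, zero_mul,
    Finset.sum_const_zero] at hpair
  exact (mul_eq_zero.mp hpair.symm).resolve_right (S.isIrrChar_of_mem X.2 hχ).apply_one_mul_card_ne_zero

theorem exists_sum_smul_superchar_eq {w : G → ℂ} (hw : w ∈ S.classFun) :
    ∃ c : S.parts → ℂ, ∑ X, c X • S.superchar X = w := by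
  have hspan : Submodule.span ℂ (Set.range S.supercharClassFun) = ⊤ :=
    S.linearIndependent_supercharClassFun.span_eq_top_of_card_eq_finrank'
      (by rw [finrank_classFun, Fintype.card_coe])
  obtain ⟨c, hc⟩ := (Submodule.mem_span_range_iff_exists_fun ℂ).mp
    (hspan ▸ Submodule.mem_top : (⟨w, hw⟩ : S.classFun) ∈ _)
  exact ⟨c, by rw [← coe_sum_smul_supercharClassFun, hc]⟩

theorem sum_superchar [DecidableEq G] :
    ∑ X : S.parts, S.superchar X = fun g => if g = 1 then (Nat.card G : ℂ) else 0 := by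
  set δ : G → ℂ := fun g => if g = 1 then (Nat.card G : ℂ) else 0
  have hδ : δ ∈ S.classFun := fun g h hh => by simp only [δ, S.eq_one_iff_of_mem_cls hh]
  obtain ⟨c, hc⟩ := S.exists_sum_smul_superchar_eq hδ
  have hc_one : ∀ X, c X = 1 := by
    intro X
    obtain ⟨χ, hχ⟩ := S.parts_nonempty X X.2
    have hpair := S.charPairing_sum_smul_superchar c X hχ
    have hδχ : charPairing δ χ = 1 * (χ 1 * Nat.card G) := by
      simp [charPairing, δ, mul_comm]
    rw [hc, hδχ] at hpair
    exact mul_right_cancel₀ (S.isIrrChar_of_mem X.2 hχ).apply_one_mul_card_ne_zero hpair.symm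
  simpa [hc_one] using hc

theorem exists_superchar_apply_ne_zero (g : G) : ∃ X : S.parts, S.superchar X g ≠ 0 := by
  obtain ⟨c, hc⟩ := S.exists_sum_smul_superchar_eq (w := fun _ => 1) fun _ _ _ => rfl
  by_contra! hzero
  simpa [hzero] using congrFun hc g

theorem re_superchar_one_pos {X : Finset (G → ℂ)} (hX : X ∈ S.parts) :
    0 < (S.superchar X 1).re := by
  rw [superchar, Complex.re_sum]
  refine Finset.sum_pos (fun χ hχ => ?_) (S.parts_nonempty X hX)
  obtain ⟨n, hn, h1⟩ := (S.isIrrChar_of_mem hX hχ).exists_apply_one_eq_natCast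
  rw [h1, ← Nat.cast_mul, Complex.natCast_re]
  positivity

variable {S}

theorem IsCaminaElt.superchar_apply_eq_zero_or_eq_apply_one {g : G} (hcam : S.IsCaminaElt g)
    (hg : g ∈ S.derived) {X : Finset (G → ℂ)} (hX : X ∈ S.parts) :
    S.superchar X g = 0 ∨ S.superchar X g = S.superchar X 1 := by
  by_cases hker : S.derived ≤ charKer (S.superchar X)
  · right
    simpa using hker hg 1
  · left
    exact hcam _ ⟨⟨X, hX, rfl⟩, hker⟩

theorem IsCaminaElt.eq_one_of_mem_derived {g : G} (hcam : S.IsCaminaElt g)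
    (hg : g ∈ S.derived) : g = 1 := by
  classical
  by_contra hg1
  have hnonneg : ∀ X : S.parts, 0 ≤ (S.superchar X g).re := fun X => by
    rcases hcam.superchar_apply_eq_zero_or_eq_apply_one hg X.2 with h | h
    · simp [h]
    · exact h ▸ (S.re_superchar_one_pos X.2).le
  obtain ⟨X₀, hX₀⟩ := S.exists_superchar_apply_ne_zero g
  have hpos : 0 < (S.superchar X₀ g).re := by
    rcases hcam.superchar_apply_eq_zero_or_eq_apply_one hg X₀.2 with h | h
    · exact absurd h hX₀
    · exact h ▸ S.re_superchar_one_pos X₀.2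
  have hsum : ∑ X : S.parts, (S.superchar X g).re = 0 := by
    rw [← Complex.re_sum, ← Finset.sum_apply, S.sum_superchar]
    simp [hg1]
  exact hpos.ne' ((Finset.sum_eq_zero_iff_of_nonneg fun X _ => hnonneg X).mp hsum X₀
    (Finset.mem_univ _))

end SCT

/-- if `(G,N)` is an `S`-GCP then `[G,S] ≤ N`. -/
theorem derived_le_of_isGCP (S : SCT G) (N : Subgroup G) (h : S.IsGCP N) :
    S.derived ≤ N := by
  intro d hd
  by_contra hdN
  exact hdN ((h.2 d hdN).eq_one_of_mem_derived hd ▸ N.one_mem)
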